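/- Let X and Y be smooth manifolds (finite-dimensional, Hausdorff, second countable, without boundary) and let f : X → Y be a smooth map. If X = X₁ ∪ X₂, then ld(f) ≤ max( ld(f|X₁), ld(f|X₂) ), with equality when both X₁ and X₂ are closed subsets of X. -/

import Mathlib

open Filter Topology Set Manifold

/-- The limit set `L(f)` of a map `f : X → Y`. -/
def limitSet {X Y : Type*} [TopologicalSpace X] [TopologicalSpace Y] (f : X → Y) : Set Y :=
  {y | ∃ u : ℕ → X, (∀ p : X, ¬ MapClusterPt p Filter.atTop u) ∧
    Filter.Tendsto (fun n => f (u n)) Filter.atTop (nhds y)}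

/-- A bundled smooth (boundaryless) `n`-manifold: Hausdorff, second countable, modeled on
`ℝⁿ`. -/
structure SmoothMfld (n : ℕ) : Type 1 where
  carrier : Type
  [top : TopologicalSpace carrier]
  [t2 : T2Space carrier]
  [sc : SecondCountableTopology carrier]
  [cs : ChartedSpace (EuclideanSpace ℝ (Fin n)) carrier]
  [sm : IsManifold (𝓡 n) (⊤ : ℕ∞) carrier]

attribute [instance] SmoothMfld.top SmoothMfld.t2 SmoothMfld.sc SmoothMfld.cs SmoothMfld.sm

/-- The smooth dimension `sd S` of a subset `S` of a smooth manifold `Y`: the smallest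
integer `m` such that `S` is contained in the image of a smooth map from a smooth manifold
of dimension `≤ m`; by convention `sd ∅ = -1`. -/
noncomputable def sd (d : ℕ) {Y : Type*} [TopologicalSpace Y]
    [ChartedSpace (EuclideanSpace ℝ (Fin d)) Y] (S : Set Y) : ℤ :=
  sInf {m : ℤ | (S = ∅ ∧ -1 ≤ m) ∨
    ∃ n : ℕ, (n : ℤ) ≤ m ∧ ∃ (M : SmoothMfld n) (g : M.carrier → Y),
      ContMDiff (𝓡 n) (𝓡 d) (⊤ : ℕ∞) g ∧ S ⊆ Set.range g}

set_option linter.unusedSectionVars false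
set_option linter.unusedVariables false

noncomputable section Aux
open Metric

theorem limitSet_restrict_subset {X Y : Type*} [TopologicalSpace X] [TopologicalSpace Y]
    (f : X → Y) {A : Set X} (hA : IsClosed A) :
    limitSet (A.restrict f) ⊆ limitSet f := by
  rintro y ⟨v, hv, htv⟩
  refine ⟨fun n => (v n).1, fun p hp => ?_, htv⟩
  have hpA : p ∈ A := by
    have : p ∈ closure A := by
      rcases (mapClusterPt_iff_frequently.1 hp (univ) univ_mem).exists with _
      refine mem_closure_iff_clusterPt.2 (hp.clusterPt.mono ?_)
      exact le_principal_iff.2 (mem_map.2 (Eventually.of_forall fun n => (v n).2))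
    rwa [hA.closure_eq] at this
  refine hv ⟨p, hpA⟩ ?_
  rw [mapClusterPt_iff_frequently] at hp ⊢
  intro s hs
  rcases mem_nhds_induced Subtype.val _ _ |>.1 hs with ⟨t, ht, hts⟩
  exact (hp t ht).mono fun n hn => hts hn

theorem limitSet_subset_union {X Y : Type*} [TopologicalSpace X] [TopologicalSpace Y]
    (f : X → Y) (X₁ X₂ : Set X) (hcover : X₁ ∪ X₂ = Set.univ) :
    limitSet f ⊆ limitSet (X₁.restrict f) ∪ limitSet (X₂.restrict f) := by
  rintro y ⟨u, hu, htu⟩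
  have key : ∀ A : Set X, (∃ᶠ n in atTop, u n ∈ A) → y ∈ limitSet (A.restrict f) := by
    intro A hfreq
    obtain ⟨φ, hφ, hmem⟩ := extraction_of_frequently_atTop hfreq
    refine ⟨fun n => ⟨u (φ n), hmem n⟩, fun p hp => ?_, ?_⟩
    · refine hu p.1 ?_
      have h1 : MapClusterPt (p : X) atTop (fun n => u (φ n)) :=
        hp.continuousAt_comp (continuous_subtype_val.continuousAt)
      exact h1.of_comp hφ.tendsto_atTop
    · exact htu.comp hφ.tendsto_atTop
  by_cases h1 : ∃ᶠ n in atTop, u n ∈ X₁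
  · exact Or.inl (key X₁ h1)
  · refine Or.inr (key X₂ ?_)
    rw [not_frequently] at h1
    refine (h1.mono fun n hn => ?_).frequently
    have : u n ∈ X₁ ∪ X₂ := hcover ▸ mem_univ _
    exact this.resolve_left hn


/-- Lemma A: the range of a smooth map from a second-countable `n₁`-manifold is covered by
countably many images of smooth maps defined on open subsets of `ℝⁿ`, for any `n ≥ n₁`. -/
theorem exists_countable_cover {n₁ n d : ℕ} (h : n₁ ≤ n) {Y Z : Type*}
    [TopologicalSpace Y] [ChartedSpace (EuclideanSpace ℝ (Fin d)) Y]
    [TopologicalSpace Z] [SecondCountableTopology Z]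
    [ChartedSpace (EuclideanSpace ℝ (Fin n₁)) Z] [IsManifold (𝓡 n₁) (⊤ : ℕ∞) Z]
    [Nonempty Y]
    (g : Z → Y) (hg : ContMDiff (𝓡 n₁) (𝓡 d) (⊤ : ℕ∞) g) :
    ∃ (W : ℕ → Set (EuclideanSpace ℝ (Fin n))) (φ : ℕ → EuclideanSpace ℝ (Fin n) → Y),
      (∀ k, IsOpen (W k)) ∧ (∀ k, ContMDiffOn (𝓡 n) (𝓡 d) (⊤ : ℕ∞) (φ k) (W k)) ∧
      Set.range g ⊆ ⋃ k, φ k '' W k := by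
  rcases isEmpty_or_nonempty Z with hZ | hZ
  · refine ⟨fun _ => ∅, fun _ _ => Classical.arbitrary Y, fun _ => isOpen_empty,
      fun _ x hx => absurd hx (Set.notMem_empty x), ?_⟩
    rw [Set.range_eq_empty]
    exact Set.empty_subset _
  -- the projection `π : ℝⁿ → ℝ^{n₁}`
  set π : EuclideanSpace ℝ (Fin n) → EuclideanSpace ℝ (Fin n₁) :=
    fun x => (WithLp.toLp 2 (fun j => x (Fin.castLE h j)) : EuclideanSpace ℝ (Fin n₁)) with hπdef
  have hπ : ContDiff ℝ ((⊤ : ℕ∞)) π := by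
    rw [contDiff_euclidean]
    intro j
    exact (contDiff_euclidean.1 contDiff_id) (Fin.castLE h j)
  have hπsec : ∀ y : EuclideanSpace ℝ (Fin n₁),
      π (WithLp.toLp 2 (fun j => if h' : (j : ℕ) < n₁ then y ⟨j, h'⟩ else 0)) = y := by
    intro y
    ext j
    show (if h' : ((Fin.castLE h j : Fin n) : ℕ) < n₁ then y ⟨_, h'⟩ else 0) = y j
    rw [dif_pos (by simp : ((Fin.castLE h j : Fin n) : ℕ) < n₁)]
    exact congrArg y (Fin.ext rfl)
  -- countable cover by chart sources
  obtain ⟨t, htc, htU⟩ := TopologicalSpace.isOpen_iUnion_countable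
    (fun z : Z => (chartAt (EuclideanSpace ℝ (Fin n₁)) z).source)
    (fun z => (chartAt _ z).open_source)
  have htU' : ⋃ z ∈ t, (chartAt (EuclideanSpace ℝ (Fin n₁)) z).source = Set.univ := by
    rw [htU]
    exact Set.iUnion_eq_univ_iff.2 fun z => ⟨z, mem_chart_source _ z⟩
  obtain ⟨z₀⟩ := hZ
  obtain ⟨c, hc⟩ := (htc.insert z₀).exists_eq_range (Set.insert_nonempty _ _)
  set e : ℕ → OpenPartialHomeomorph Z (EuclideanSpace ℝ (Fin n₁)) :=
    fun k => chartAt (EuclideanSpace ℝ (Fin n₁)) (c k) with he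
  refine ⟨fun k => π ⁻¹' (e k).target, fun k => g ∘ (e k).symm ∘ π, ?_, ?_, ?_⟩
  · exact fun k => (e k).open_target.preimage hπ.continuous
  · intro k
    have h1 : ContMDiffOn (𝓡 n₁) (𝓡 d) (⊤ : ℕ∞) (g ∘ (e k).symm) (e k).target :=
      ContMDiffOn.comp (t := Set.univ) hg.contMDiffOn contMDiffOn_chart_symm
        (fun x _ => Set.mem_univ _)
    exact h1.comp (hπ.contMDiff.contMDiffOn) (fun x hx => hx)
  · rintro y ⟨z, rfl⟩
    have hz : z ∈ ⋃ w ∈ insert z₀ t, (chartAt (EuclideanSpace ℝ (Fin n₁)) w).source := by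
      have : z ∈ ⋃ w ∈ t, (chartAt (EuclideanSpace ℝ (Fin n₁)) w).source := htU' ▸ Set.mem_univ z
      exact Set.biUnion_subset_biUnion_left (Set.subset_insert _ _) this
    rw [Set.biUnion_eq_iUnion] at hz
    obtain ⟨⟨w, hw⟩, hzw⟩ := Set.mem_iUnion.1 hz
    have : w ∈ Set.range c := hc ▸ hw
    obtain ⟨k, rfl⟩ := this
    set w' : EuclideanSpace ℝ (Fin n) :=
      (WithLp.toLp 2 (fun j => if h' : (j : ℕ) < n₁ then (e k) z ⟨j, h'⟩ else 0)) with hw'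
    have hπw' : π w' = (e k) z := hπsec _
    refine Set.mem_iUnion.2 ⟨k, ⟨w', ?_, ?_⟩⟩
    · show w' ∈ π ⁻¹' (e k).target
      rw [Set.mem_preimage, hπw']
      exact (e k).map_source hzw
    · show g ((e k).symm (π w')) = g z
      rw [hπw', (e k).left_inv hzw]

open Classical in
/-- Master combination lemma: countably many smooth partial maps on open subsets of `ℝⁿ`
(`n ≥ 1`) combine into one smooth map from an `n`-manifold. -/
theorem exists_mfld_of_countable {n d : ℕ} (hn : 0 < n) {Y : Type*}
    [TopologicalSpace Y] [ChartedSpace (EuclideanSpace ℝ (Fin d)) Y]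
    (W : ℕ → Set (EuclideanSpace ℝ (Fin n))) (φ : ℕ → EuclideanSpace ℝ (Fin n) → Y)
    (hW : ∀ k, IsOpen (W k)) (hφ : ∀ k, ContMDiffOn (𝓡 n) (𝓡 d) (⊤ : ℕ∞) (φ k) (W k)) (y₀ : Y) :
    ∃ (M : SmoothMfld n) (g : M.carrier → Y),
      ContMDiff (𝓡 n) (𝓡 d) (⊤ : ℕ∞) g ∧ (⋃ k, φ k '' W k) ⊆ Set.range g := by
  set v : EuclideanSpace ℝ (Fin n) := EuclideanSpace.single ⟨0, hn⟩ (1 : ℝ) with hv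
  have hvnorm : ‖v‖ = 1 := by
    rw [hv, EuclideanSpace.norm_single]; norm_num
  set c : ℕ → EuclideanSpace ℝ (Fin n) := fun k => ((3 * k : ℝ)) • v with hc
  set ψ : ℕ → OpenPartialHomeomorph (EuclideanSpace ℝ (Fin n)) (EuclideanSpace ℝ (Fin n)) := fun k => OpenPartialHomeomorph.univBall (c k) 1 with hψ
  have hψsource : ∀ k, (ψ k).source = univ := fun k => OpenPartialHomeomorph.univBall_source _ _
  have hψtarget : ∀ k, (ψ k).target = ball (c k) 1 := fun k =>
    OpenPartialHomeomorph.univBall_target _ one_pos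
  set V : ℕ → Set (EuclideanSpace ℝ (Fin n)) := fun k => (ψ k) '' (W k) with hV
  have hVopen : ∀ k, IsOpen (V k) :=
    fun k => (ψ k).isOpen_image_of_subset_source (hW k) (by rw [hψsource]; exact subset_univ _)
  have hVball : ∀ k, V k ⊆ ball (c k) 1 := by
    rintro k x ⟨w, _, rfl⟩
    rw [← hψtarget]
    exact (ψ k).map_source (by rw [hψsource]; trivial)
  have hdisj : ∀ j k, j ≠ k → Disjoint (V j) (V k) := by
    intro j k hjk
    refine Disjoint.mono (hVball j) (hVball k) (ball_disjoint_ball ?_)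
    rw [hc]
    have : dist ((3 * j : ℝ) • v) ((3 * k : ℝ) • v) = dist (3 * j : ℝ) (3 * k : ℝ) := by
      rw [dist_eq_norm, dist_eq_norm, ← sub_smul, norm_smul, hvnorm, mul_one, Real.norm_eq_abs]
    rw [this, Real.dist_eq]
    have : (1 : ℝ) ≤ |(j : ℝ) - k| := by
      rcases hjk.lt_or_gt with h | h
      · rw [abs_sub_comm, abs_of_pos (sub_pos.2 (by exact_mod_cast h))]
        have : (j : ℝ) + 1 ≤ k := by exact_mod_cast Nat.succ_le_of_lt h
        linarith
      · rw [abs_of_pos (sub_pos.2 (by exact_mod_cast h))]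
        have : (k : ℝ) + 1 ≤ j := by exact_mod_cast Nat.succ_le_of_lt h
        linarith
    calc (1 : ℝ) + 1 ≤ 3 * |(j:ℝ) - k| := by linarith
    _ = |3 * (j:ℝ) - 3 * k| := by
          rw [← mul_sub, abs_mul, abs_of_pos (by norm_num : (0:ℝ) < 3)]
  set U : Set (EuclideanSpace ℝ (Fin n)) := ⋃ k, V k with hU
  have hUopen : IsOpen U := isOpen_iUnion hVopen
  set Φ : EuclideanSpace ℝ (Fin n) → Y := fun x => if h : ∃ k, x ∈ V k then φ (Nat.find h) ((ψ (Nat.find h)).symm x) else y₀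
    with hΦ
  have hΦeq : ∀ k, ∀ x ∈ V k, Φ x = φ k ((ψ k).symm x) := by
    intro k x hx
    have h : ∃ j, x ∈ V j := ⟨k, hx⟩
    have hk : Nat.find h = k := by
      by_contra hne
      exact (hdisj _ _ hne).ne_of_mem (Nat.find_spec h) hx rfl
    rw [hΦ]
    simp only [dif_pos h, hk]
  have hψsymm : ∀ k, ContMDiffOn (𝓡 n) (𝓡 n) (⊤ : ℕ∞) (ψ k).symm (V k) := by
    intro k
    have : ContDiffOn ℝ ((⊤ : ℕ∞)) (ψ k).symm (ball (c k) 1) := OpenPartialHomeomorph.contDiffOn_univBall_symm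
    exact (this.mono (hVball k)).contMDiffOn
  have hΦsmooth : ContMDiffOn (𝓡 n) (𝓡 d) (⊤ : ℕ∞) Φ U := by
    intro x hx
    obtain ⟨k, hk⟩ := mem_iUnion.1 hx
    have hmaps : V k ⊆ (ψ k).symm ⁻¹' (W k) := by
      rintro z ⟨w, hw, rfl⟩
      show (ψ k).symm ((ψ k) w) ∈ W k
      rwa [(ψ k).left_inv (by rw [hψsource]; trivial)]
    have h1 : ContMDiffOn (𝓡 n) (𝓡 d) (⊤ : ℕ∞) (φ k ∘ (ψ k).symm) (V k) :=
      (hφ k).comp (hψsymm k) hmaps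
    have h2 : ContMDiffOn (𝓡 n) (𝓡 d) (⊤ : ℕ∞) Φ (V k) := h1.congr (hΦeq k)
    exact ((h2.contMDiffAt ((hVopen k).mem_nhds hk)).contMDiffWithinAt).mono_of_mem_nhdsWithin
      (nhdsWithin_le_nhds ((hVopen k).mem_nhds hk))
  refine ⟨⟨(⟨U, hUopen⟩ : TopologicalSpace.Opens (EuclideanSpace ℝ (Fin n)))⟩, fun u => Φ u.1, ?_, ?_⟩
  · exact hΦsmooth.comp_contMDiff contMDiff_subtype_val (fun u => u.2)
  · rintro y ⟨s, ⟨k, rfl⟩, ⟨w, hw, rfl⟩⟩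
    have hmem : (ψ k) w ∈ U := mem_iUnion.2 ⟨k, mem_image_of_mem _ hw⟩
    refine ⟨⟨(ψ k) w, hmem⟩, ?_⟩
    show Φ ((ψ k) w) = φ k w
    rw [hΦeq k _ (mem_image_of_mem _ hw), (ψ k).left_inv (by rw [hψsource]; trivial)]

instance : Subsingleton (EuclideanSpace ℝ (Fin 0)) :=
  ⟨fun a b => PiLp.ext fun i => i.elim0⟩

/-- A second-countable space charted on `ℝ⁰` is countable. -/
theorem countable_of_zero_dim {Z : Type*} [TopologicalSpace Z] [SecondCountableTopology Z]
    [ChartedSpace (EuclideanSpace ℝ (Fin 0)) Z] : Countable Z := by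
  obtain ⟨t, htc, htU⟩ := TopologicalSpace.isOpen_iUnion_countable
    (fun z : Z => (chartAt (EuclideanSpace ℝ (Fin 0)) z).source)
    (fun z => (chartAt _ z).open_source)
  have htU' : ⋃ z ∈ t, (chartAt (EuclideanSpace ℝ (Fin 0)) z).source = Set.univ := by
    rw [htU]
    exact Set.iUnion_eq_univ_iff.2 fun z => ⟨z, mem_chart_source _ z⟩
  have : (Set.univ : Set Z).Countable := by
    rw [← htU']
    refine Set.Countable.biUnion htc fun z _ => ?_
    have hss : ((chartAt (EuclideanSpace ℝ (Fin 0)) z).source).Subsingleton := by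
      intro a ha b hb
      have := (chartAt (EuclideanSpace ℝ (Fin 0)) z).injOn ha hb (Subsingleton.elim _ _)
      exact this
    exact hss.countable
  exact countable_univ_iff.mp this

/-- The chart of `ℕ` (with discrete topology) at a point, into `ℝ⁰`. -/
def natChart (k : ℕ) : OpenPartialHomeomorph ℕ (EuclideanSpace ℝ (Fin 0)) where
  toFun := fun _ => 0
  invFun := fun _ => k
  source := {k}
  target := Set.univ
  map_source' := fun _ _ => Set.mem_univ _
  map_target' := fun _ _ => rfl
  left_inv' := fun x hx => hx.symm
  right_inv' := fun y _ => Subsingleton.elim _ _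
  open_source := isOpen_discrete _
  open_target := isOpen_univ
  continuousOn_toFun := continuous_const.continuousOn
  continuousOn_invFun := continuous_const.continuousOn

instance : ChartedSpace (EuclideanSpace ℝ (Fin 0)) ℕ where
  atlas := Set.range natChart
  chartAt := natChart
  mem_chart_source k := rfl
  chart_mem_atlas k := ⟨k, rfl⟩

theorem contDiffOn_zero_dim {f : EuclideanSpace ℝ (Fin 0) → EuclideanSpace ℝ (Fin 0)}
    {s : Set (EuclideanSpace ℝ (Fin 0))} : ContDiffOn ℝ ((⊤ : ℕ∞)) f s := by
  exact (contDiffOn_const (c := (0 : EuclideanSpace ℝ (Fin 0)))).congr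
    fun x _ => Subsingleton.elim _ _

instance : IsManifold (𝓡 0) (⊤ : ℕ∞) ℕ := by
  refine isManifold_of_contDiffOn (𝓡 0) (⊤ : ℕ∞) ℕ fun e e' he he' => ?_
  exact contDiffOn_zero_dim

/-- Any map from `ℕ` (discrete, charted on `ℝ⁰`) to a manifold is smooth. -/
theorem contMDiff_of_nat {d : ℕ} {Y : Type*} [TopologicalSpace Y]
    [ChartedSpace (EuclideanSpace ℝ (Fin d)) Y] (g : ℕ → Y) :
    ContMDiff (𝓡 0) (𝓡 d) (⊤ : ℕ∞) g := by
  intro x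
  rw [contMDiffAt_iff]
  constructor
  · exact continuous_of_discreteTopology.continuousAt
  · -- ContDiffWithinAt on a subsingleton domain
    apply ContDiffWithinAt.congr (f := fun _ => (extChartAt (𝓡 d) (g x)) (g x))
    · exact contDiffWithinAt_const
    · intro y hy
      have : y = (extChartAt (𝓡 0) x) x := Subsingleton.elim _ _
      rw [this]
      simp
    · simp

-- sd machinery
variable {d : ℕ} {Y : Type*} [TopologicalSpace Y] [T2Space Y] [SecondCountableTopology Y]
  [ChartedSpace (EuclideanSpace ℝ (Fin d)) Y] [IsManifold (𝓡 d) (⊤ : ℕ∞) Y]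

def sdSet (d : ℕ) {Y : Type*} [TopologicalSpace Y]
    [ChartedSpace (EuclideanSpace ℝ (Fin d)) Y] (S : Set Y) : Set ℤ :=
  {m : ℤ | (S = ∅ ∧ -1 ≤ m) ∨
    ∃ n : ℕ, (n : ℤ) ≤ m ∧ ∃ (M : SmoothMfld n) (g : M.carrier → Y),
      ContMDiff (𝓡 n) (𝓡 d) (⊤ : ℕ∞) g ∧ S ⊆ Set.range g}

theorem sd_eq (S : Set Y) : sd d S = sInf (sdSet d S) := rfl

theorem neg_one_le_of_mem_sdSet {S : Set Y} {m : ℤ} (hm : m ∈ sdSet d S) : -1 ≤ m := by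
  rcases hm with ⟨_, hm⟩ | ⟨n, hn, _⟩
  · exact hm
  · exact le_trans (le_trans (by norm_num) (Int.natCast_nonneg n)) hn

theorem sdSet_bddBelow (S : Set Y) : BddBelow (sdSet d S) :=
  ⟨-1, fun _ hm => neg_one_le_of_mem_sdSet hm⟩

theorem sdSet_nonempty (S : Set Y) : (sdSet d S).Nonempty := by
  rcases S.eq_empty_or_nonempty with rfl | ⟨y₀, hy₀⟩
  · exact ⟨-1, Or.inl ⟨rfl, le_refl _⟩⟩
  haveI : Nonempty Y := ⟨y₀⟩
  obtain ⟨W, φ, hW, hφ, hcov⟩ := exists_countable_cover (n := max d 1) (le_max_left d 1)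
    (id : Y → Y) contMDiff_id
  obtain ⟨M, g, hg, hsub⟩ := exists_mfld_of_countable (lt_max_of_lt_right one_pos) W φ hW hφ y₀
  refine ⟨(max d 1 : ℕ), Or.inr ⟨max d 1, le_refl _, M, g, hg, ?_⟩⟩
  intro y hy
  exact hsub (hcov ⟨y, rfl⟩)

theorem sd_mono {S T : Set Y} (h : S ⊆ T) : sd d S ≤ sd d T := by
  rw [sd_eq, sd_eq]
  refine csInf_le_csInf (sdSet_bddBelow S) (sdSet_nonempty T) ?_
  rintro m (⟨rfl, hm⟩ | ⟨n, hn, M, g, hg, hsub⟩)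
  · exact Or.inl ⟨Set.subset_empty_iff.1 h, hm⟩
  · exact Or.inr ⟨n, hn, M, g, hg, h.trans hsub⟩

theorem sd_union_le (A B : Set Y) : sd d (A ∪ B) ≤ max (sd d A) (sd d B) := by
  have ha : sd d A ∈ sdSet d A := Int.csInf_mem (sdSet_nonempty A) (sdSet_bddBelow A)
  have hb : sd d B ∈ sdSet d B := Int.csInf_mem (sdSet_nonempty B) (sdSet_bddBelow B)
  have hA1 : -1 ≤ sd d A := neg_one_le_of_mem_sdSet ha
  rw [sd_eq]
  refine csInf_le (sdSet_bddBelow _) ?_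
  rcases ha with ⟨hAe, _⟩ | ⟨n₁, hn₁, M₁, g₁, hg₁, hA⟩
  · rcases hb with ⟨hBe, _⟩ | ⟨n₂, hn₂, M₂, g₂, hg₂, hB⟩
    · exact Or.inl ⟨by rw [hAe, hBe, Set.empty_union], le_trans hA1 (le_max_left _ _)⟩
    · exact Or.inr ⟨n₂, le_trans hn₂ (le_max_right _ _), M₂, g₂, hg₂, by
        rw [hAe, Set.empty_union]; exact hB⟩
  rcases hb with ⟨hBe, _⟩ | ⟨n₂, hn₂, M₂, g₂, hg₂, hB⟩
  · exact Or.inr ⟨n₁, le_trans hn₁ (le_max_left _ _), M₁, g₁, hg₁, by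
      rw [hBe, Set.union_empty]; exact hA⟩
  have h0A : (0 : ℤ) ≤ sd d A := le_trans (Int.natCast_nonneg _) hn₁
  have h0B : (0 : ℤ) ≤ sd d B := le_trans (Int.natCast_nonneg _) hn₂
  rcases (A ∪ B).eq_empty_or_nonempty with hABe | ⟨y₀, hy₀⟩
  · exact Or.inl ⟨hABe, le_trans (by linarith) (le_max_left _ _)⟩
  haveI : Nonempty Y := ⟨y₀⟩
  rcases Nat.eq_zero_or_pos (max n₁ n₂) with hz | hpos
  · -- zero-dimensional case: everything countable
    obtain ⟨h1, h2⟩ := Nat.max_eq_zero_iff.1 hz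
    subst h1; subst h2
    haveI := countable_of_zero_dim (Z := M₁.carrier)
    haveI := countable_of_zero_dim (Z := M₂.carrier)
    have hcnt : (A ∪ B).Countable :=
      Set.Countable.union ((Set.countable_range g₁).mono hA) ((Set.countable_range g₂).mono hB)
    obtain ⟨g0, hg0⟩ := hcnt.exists_eq_range ⟨y₀, hy₀⟩
    exact Or.inr ⟨0, le_trans hn₁ (le_max_left _ _), SmoothMfld.mk ℕ, g0,
      contMDiff_of_nat g0, hg0.le⟩
  · obtain ⟨W₁, φ₁, hW₁, hφ₁, hcov₁⟩ :=
      exists_countable_cover (n := max n₁ n₂) (le_max_left n₁ n₂) g₁ hg₁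
    obtain ⟨W₂, φ₂, hW₂, hφ₂, hcov₂⟩ :=
      exists_countable_cover (n := max n₁ n₂) (le_max_right n₁ n₂) g₂ hg₂
    set W : ℕ → Set (EuclideanSpace ℝ (Fin (max n₁ n₂))) :=
      fun k => if k % 2 = 0 then W₁ (k / 2) else W₂ (k / 2) with hWdef
    set φ : ℕ → EuclideanSpace ℝ (Fin (max n₁ n₂)) → Y :=
      fun k => if k % 2 = 0 then φ₁ (k / 2) else φ₂ (k / 2) with hφdef
    have hWo : ∀ k, IsOpen (W k) := by
      intro k
      by_cases hk : k % 2 = 0 <;> simp only [hWdef, hk, if_true, if_false] <;>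
        first | exact hW₁ _ | exact hW₂ _
    have hφs : ∀ k, ContMDiffOn (𝓡 (max n₁ n₂)) (𝓡 d) (⊤ : ℕ∞) (φ k) (W k) := by
      intro k
      by_cases hk : k % 2 = 0 <;> simp only [hWdef, hφdef, hk, if_true, if_false] <;>
        first | exact hφ₁ _ | exact hφ₂ _
    obtain ⟨M, g, hg, hsub⟩ := exists_mfld_of_countable hpos W φ hWo hφs y₀
    refine Or.inr ⟨max n₁ n₂, ?_, M, g, hg, ?_⟩
    · rw [Nat.cast_max]
      exact max_le_max hn₁ hn₂
    · refine Set.union_subset ?_ ?_ |>.trans hsub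
      · refine hA.trans <| hcov₁.trans ?_
        refine Set.iUnion_subset fun j => ?_
        refine Set.subset_iUnion_of_subset (2 * j) ?_
        have e1 : (2 * j) % 2 = 0 := by omega
        have e2 : (2 * j) / 2 = j := by omega
        simp only [hWdef, hφdef, e1, e2, if_true]
        exact subset_refl _
      · refine hB.trans <| hcov₂.trans ?_
        refine Set.iUnion_subset fun j => ?_
        refine Set.subset_iUnion_of_subset (2 * j + 1) ?_
        have e1 : ¬((2 * j + 1) % 2 = 0) := by omega
        have e2 : (2 * j + 1) / 2 = j := by omega
        simp only [hWdef, hφdef, e1, e2, if_false]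
        exact subset_refl _

end Aux

/-- For a smooth map `f : X → Y`, if `X = X₁ ∪ X₂` then
`ld f ≤ max (ld (f|X₁)) (ld (f|X₂))`, with equality when `X₁` and `X₂` are closed;
here `ld g = sd (L g)` is the limit dimension. -/
theorem limitDim_union
    {n d : ℕ} {X Y : Type*}
    [TopologicalSpace X] [T2Space X] [SecondCountableTopology X]
    [ChartedSpace (EuclideanSpace ℝ (Fin n)) X] [IsManifold (𝓡 n) (⊤ : ℕ∞) X]
    [TopologicalSpace Y] [T2Space Y] [SecondCountableTopology Y]
    [ChartedSpace (EuclideanSpace ℝ (Fin d)) Y] [IsManifold (𝓡 d) (⊤ : ℕ∞) Y]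
    (f : X → Y) (hf : ContMDiff (𝓡 n) (𝓡 d) (⊤ : ℕ∞) f)
    (X₁ X₂ : Set X) (hcover : X₁ ∪ X₂ = Set.univ) :
    sd d (limitSet f) ≤ max (sd d (limitSet (X₁.restrict f))) (sd d (limitSet (X₂.restrict f))) ∧
      (IsClosed X₁ → IsClosed X₂ →
        sd d (limitSet f) =
          max (sd d (limitSet (X₁.restrict f))) (sd d (limitSet (X₂.restrict f)))) := by
  have hle : sd d (limitSet f) ≤
      max (sd d (limitSet (X₁.restrict f))) (sd d (limitSet (X₂.restrict f))) :=
    (sd_mono (limitSet_subset_union f X₁ X₂ hcover)).trans (sd_union_le _ _)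
  refine ⟨hle, fun h1 h2 => le_antisymm hle (max_le ?_ ?_)⟩
  · exact sd_mono (limitSet_restrict_subset f h1)
  · exact sd_mono (limitSet_restrict_subset f h2)
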